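/- Let G be a finite connected simple graph without isolated vertices that has two distinct vertices u and v satisfying N[u] ⊆ N[v]. Then Dom has a winning strategy in the Dom-start Disjoint Domination Game on G. -/

import Mathlib

/-!
Dom keeps an invariant whenever Sepy is to move. Call `w` a threat in color `c` if `w` is
colored `c` and `N[w]` contains no vertex of the other color. The invariant says that every
threat is defused: some uncolored `x ∈ N[w]` has all of `N[x]` already dominated in color `c`,
so `x` can never legally be colored `c` and `N[w]` never becomes monochromatic. From such a
position no legal move completes a monochromatic closed neighborhood, and after Sepy colors `x`
with `c` the only threat that may not be defused is `x` itself. Dom then colors an uncolored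
vertex of `N[x]` with the other color; if `x` is no threat, Dom makes a quiet move instead, a
legal move `(y, c)` such that `N[y]` already meets the other color, which exists by
connectivity as soon as some vertex is colored. Dom opens by coloring `v` purple: the threat at
`v` is defused by `u`, because `N[u] ⊆ N[v]`.
-/

namespace DDG

variable {V : Type*}

/-- The closed neighborhood `N[v]` of a vertex `v`. -/
def closedNbhd (G : SimpleGraph V) (v : V) : Set V := insert v (G.neighborSet v)

/-- `D` is a dominating set of `G`: every vertex has a member of `D`
in its closed neighborhood. -/
def Dominates (G : SimpleGraph V) (D : Set V) : Prop :=
  ∀ v : V, (closedNbhd G v ∩ D).Nonempty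

/-- A position of the game: the sets of purple and blue vertices. -/
structure Pos (V : Type*) where
  purple : Set V
  blue : Set V

namespace Pos

/-- The vertex class of a color (`true` = purple, `false` = blue). -/
def colorSet (p : Pos V) (c : Bool) : Set V := if c then p.purple else p.blue

/-- The position obtained by coloring vertex `v` with color `c`. -/
def play (p : Pos V) (v : V) (c : Bool) : Pos V :=
  if c then ⟨insert v p.purple, p.blue⟩ else ⟨p.purple, insert v p.blue⟩

end Pos

/-- A legal move of the Disjoint Domination Game: select an uncolored vertex `v`
and a color `c` such that some `u ∈ N[v]` is not yet dominated in color `c`. -/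
def LegalMove (G : SimpleGraph V) (p : Pos V) (v : V) (c : Bool) : Prop :=
  v ∉ p.purple ∪ p.blue ∧ ∃ u ∈ closedNbhd G v, closedNbhd G u ∩ p.colorSet c = ∅

/-- End condition ⟨s⟩: some closed neighborhood is monochromatic; Sepy wins. -/
def SepyEnd (G : SimpleGraph V) (p : Pos V) : Prop :=
  ∃ v : V, closedNbhd G v ⊆ p.purple ∨ closedNbhd G v ⊆ p.blue

/-- End condition ⟨d⟩: both color classes are dominating sets; Dom wins. -/
def DomEnd (G : SimpleGraph V) (p : Pos V) : Prop :=
  Dominates G p.purple ∧ Dominates G p.blue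

/-- `DomWins G turn p` : Dom has a winning strategy in the Disjoint Domination Game
from position `p`, where `turn = true` iff it is Dom's move. -/
inductive DomWins (G : SimpleGraph V) : Bool → Pos V → Prop
  | terminal (turn : Bool) (p : Pos V) :
      ¬ SepyEnd G p → DomEnd G p → DomWins G turn p
  | domStep (p : Pos V) (v : V) (c : Bool) :
      ¬ SepyEnd G p → ¬ DomEnd G p → LegalMove G p v c →
      DomWins G false (p.play v c) → DomWins G true p
  | sepyStep (p : Pos V) :
      ¬ SepyEnd G p → ¬ DomEnd G p →
      (∃ v c, LegalMove G p v c) →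
      (∀ v c, LegalMove G p v c → DomWins G true (p.play v c)) →
      DomWins G false p

/-- `SepyWins G turn p` : Sepy has a winning strategy in the Disjoint Domination Game
from position `p`, where `turn = true` iff it is Dom's move. -/
inductive SepyWins (G : SimpleGraph V) : Bool → Pos V → Prop
  | terminal (turn : Bool) (p : Pos V) : SepyEnd G p → SepyWins G turn p
  | sepyStep (p : Pos V) (v : V) (c : Bool) :
      ¬ SepyEnd G p → ¬ DomEnd G p → LegalMove G p v c →
      SepyWins G true (p.play v c) → SepyWins G false p
  | domStep (p : Pos V) :
      ¬ SepyEnd G p → ¬ DomEnd G p →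
      (∃ v c, LegalMove G p v c) →
      (∀ v c, LegalMove G p v c → SepyWins G false (p.play v c)) →
      SepyWins G true p

end DDG


open DDG


theorem SimpleGraph.Reachable.of_forall_adj {V : Type*} {G : SimpleGraph V} {P : V → Prop}
    (hP : ∀ a b, G.Adj a b → P a → P b) {a b : V} (h : G.Reachable a b) (ha : P a) : P b := by
  rw [SimpleGraph.reachable_iff_reflTransGen] at h
  induction h with
  | refl => exact ha
  | tail _ hbc ih => exact hP _ _ hbc ih

namespace DDG

open Set

variable {V : Type*} {G : SimpleGraph V}

theorem mem_closedNbhd_iff {u v : V} : u ∈ closedNbhd G v ↔ u = v ∨ G.Adj v u := by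
  simp [closedNbhd]

theorem self_mem_closedNbhd (G : SimpleGraph V) (v : V) : v ∈ closedNbhd G v :=
  mem_insert v _

theorem mem_closedNbhd_comm {u v : V} : u ∈ closedNbhd G v ↔ v ∈ closedNbhd G u := by
  simp only [mem_closedNbhd_iff, G.adj_comm, eq_comm]

namespace Pos

def colored (p : Pos V) : Set V := p.purple ∪ p.blue

theorem mem_colored_iff {p : Pos V} {z : V} : z ∈ p.colored ↔ ∃ c, z ∈ p.colorSet c := by
  simp [colored, colorSet, or_comm]

theorem colorSet_subset_colored (p : Pos V) (c : Bool) : p.colorSet c ⊆ p.colored :=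
  fun _ hz => mem_colored_iff.2 ⟨c, hz⟩

theorem colorSet_play_self (p : Pos V) (x : V) (c : Bool) :
    (p.play x c).colorSet c = insert x (p.colorSet c) := by
  cases c <;> rfl

theorem colorSet_play_not (p : Pos V) (x : V) (c : Bool) :
    (p.play x c).colorSet (!c) = p.colorSet (!c) := by
  cases c <;> rfl

theorem colorSet_subset_play (p : Pos V) (x : V) (c c' : Bool) :
    p.colorSet c' ⊆ (p.play x c).colorSet c' := by
  obtain rfl | rfl := Bool.eq_or_eq_not c' c
  · exact (colorSet_play_self p x c').symm ▸ subset_insert x _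
  · exact (colorSet_play_not p x c).ge

theorem colored_play (p : Pos V) (x : V) (c : Bool) :
    (p.play x c).colored = insert x p.colored := by
  cases c <;> simp [colored, play, insert_union, union_insert]

theorem disjoint_colorSet {p : Pos V} (h : Disjoint p.purple p.blue) (c : Bool) :
    Disjoint (p.colorSet c) (p.colorSet (!c)) := by
  cases c
  exacts [h.symm, h]

theorem disjoint_play {p : Pos V} (h : Disjoint p.purple p.blue) {x : V} (hx : x ∉ p.colored)
    (c : Bool) : Disjoint (p.play x c).purple (p.play x c).blue := by
  simp only [colored, mem_union, not_or] at hx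
  cases c <;> simpa [play, hx] using h

theorem ncard_compl_colored_play_lt [Finite V] {p : Pos V} {x : V} (hx : x ∉ p.colored)
    (c : Bool) : (p.play x c).coloredᶜ.ncard < p.coloredᶜ.ncard := by
  rw [colored_play]
  exact ncard_lt_ncard (compl_lt_compl_iff_lt.2 (ssubset_insert hx))

end Pos

open Pos

variable {p : Pos V} {x w : V} {c c' : Bool}

theorem sepyEnd_iff :
    SepyEnd G p ↔ ∃ w c, closedNbhd G w ⊆ p.colorSet c := by
  simp [SepyEnd, Bool.exists_bool, colorSet, or_comm]

theorem domEnd_iff :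
    DomEnd G p ↔ ∀ c w, (closedNbhd G w ∩ p.colorSet c).Nonempty := by
  simp [DomEnd, Dominates, Bool.forall_bool, colorSet, and_comm]

theorem exists_uncolored_mem_closedNbhd (hse : ¬SepyEnd G p)
    (h : closedNbhd G w ∩ p.colorSet c = ∅) : ∃ y ∈ closedNbhd G w, y ∉ p.colored := by
  by_contra! hall
  refine hse (sepyEnd_iff.2 ⟨w, !c, fun t ht => ?_⟩)
  obtain ⟨c', hc'⟩ := mem_colored_iff.1 (hall t ht)
  obtain rfl | rfl := Bool.eq_or_eq_not c' c
  · exact (h.subset ⟨ht, hc'⟩).elim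
  · exact hc'

theorem legalMove_of_mem_closedNbhd {y : V} (hy : y ∉ p.colored)
    (hyw : y ∈ closedNbhd G w) (hw : closedNbhd G w ∩ p.colorSet c = ∅) : LegalMove G p y c :=
  ⟨hy, w, mem_closedNbhd_comm.1 hyw, hw⟩

theorem exists_inter_colorSet_eq_empty (hd : ¬DomEnd G p) :
    ∃ c w, closedNbhd G w ∩ p.colorSet c = ∅ := by
  simpa only [domEnd_iff, not_forall, not_nonempty_iff_eq_empty] using hd

theorem exists_legalMove (hse : ¬SepyEnd G p) (hd : ¬DomEnd G p) :
    ∃ y c, LegalMove G p y c := by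
  obtain ⟨c, w, hw⟩ := exists_inter_colorSet_eq_empty hd
  obtain ⟨y, hyw, hy⟩ := exists_uncolored_mem_closedNbhd hse hw
  exact ⟨y, c, legalMove_of_mem_closedNbhd hy hyw hw⟩

theorem exists_closedNbhd_subset_insert_of_sepyEnd_play (hse : ¬SepyEnd G p) (h : SepyEnd G (p.play x c)) :
    ∃ w, closedNbhd G w ⊆ insert x (p.colorSet c) := by
  obtain ⟨w, c', hw⟩ := sepyEnd_iff.1 h
  obtain rfl | rfl := Bool.eq_or_eq_not c' c
  · exact ⟨w, colorSet_play_self p x c' ▸ hw⟩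
  · exact (hse (sepyEnd_iff.2 ⟨w, !c, colorSet_play_not p x c ▸ hw⟩)).elim

theorem LegalMove.not_closedNbhd_subset_insert (hiso : ∀ v : V, ∃ u : V, G.Adj v u)
    (h : LegalMove G p x c) :
    ¬closedNbhd G x ⊆ insert x (p.colorSet c) := by
  intro hx
  obtain ⟨-, z, hz, hzc⟩ := h
  have colored_of_ne : ∀ t ∈ closedNbhd G x, t ≠ x → t ∈ p.colorSet c :=
    fun t ht htx => (hx ht).resolve_left htx
  obtain rfl | hzx := eq_or_ne z x
  · obtain ⟨t, ht⟩ := hiso z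
    have htz : t ∈ closedNbhd G z := mem_closedNbhd_iff.2 (Or.inr ht)
    exact hzc.subset ⟨htz, colored_of_ne t htz ht.ne'⟩
  · exact hzc.subset ⟨self_mem_closedNbhd G z, colored_of_ne z hz hzx⟩

def Threat (G : SimpleGraph V) (p : Pos V) (c : Bool) (w : V) : Prop :=
  w ∈ p.colorSet c ∧ closedNbhd G w ∩ p.colorSet (!c) = ∅

/-- `x` can never again legally receive color `c`. -/
def Blocked (G : SimpleGraph V) (p : Pos V) (c : Bool) (x : V) : Prop :=
  ∀ z ∈ closedNbhd G x, (closedNbhd G z ∩ p.colorSet c).Nonempty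

def Defused (G : SimpleGraph V) (p : Pos V) (c : Bool) (w : V) : Prop :=
  ∃ x ∈ closedNbhd G w, x ∉ p.colored ∧ Blocked G p c x

def Safe (G : SimpleGraph V) (p : Pos V) : Prop :=
  ¬SepyEnd G p ∧ ∀ c w, Threat G p c w → Defused G p c w

theorem LegalMove.not_blocked (h : LegalMove G p x c) : ¬Blocked G p c x := by
  obtain ⟨-, z, hz, hzc⟩ := h
  exact fun hb => (hb z hz).ne_empty hzc

theorem Blocked.play (h : Blocked G p c x) (y : V) (c' : Bool) : Blocked G (p.play y c') c x :=
  fun z hz => (h z hz).mono (inter_subset_inter_right _ (colorSet_subset_play p y c' c))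

theorem Threat.play_self (h : Threat G p c w) (y : V) : Threat G (p.play y c) c w :=
  ⟨colorSet_subset_play p y c c h.1, colorSet_play_not p y c ▸ h.2⟩

theorem Threat.of_play (h : Threat G (p.play x c) c' w)
    (hne : ¬(w = x ∧ c' = c)) : Threat G p c' w := by
  refine ⟨?_, subset_empty_iff.1 (h.2 ▸ inter_subset_inter_right _ (colorSet_subset_play p x c _))⟩
  have hw := h.1
  obtain rfl | rfl := Bool.eq_or_eq_not c' c
  · rw [colorSet_play_self] at hw
    exact hw.resolve_left fun hwx => hne ⟨hwx, rfl⟩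
  · rw [colorSet_play_not] at hw
    exact hw

theorem Defused.play (hleg : LegalMove G p x c) (hw : Threat G (p.play x c) c' w)
    (hd : Defused G p c' w) : Defused G (p.play x c) c' w := by
  obtain ⟨y, hyw, hy, hb⟩ := hd
  refine ⟨y, hyw, ?_, hb.play x c⟩
  rw [colored_play, mem_insert_iff, not_or]
  refine ⟨?_, hy⟩
  rintro rfl
  obtain rfl | rfl := Bool.eq_or_eq_not c' c
  · exact hleg.not_blocked hb
  · have hmono := hw.2
    rw [Bool.not_not, colorSet_play_self] at hmono
    exact hmono.subset ⟨hyw, mem_insert y _⟩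

theorem Safe.defused_play (hs : Safe G p) (hleg : LegalMove G p x c)
    (hw : Threat G (p.play x c) c' w) (hne : ¬(w = x ∧ c' = c)) :
    Defused G (p.play x c) c' w :=
  (hs.2 c' w (hw.of_play hne)).play hleg hw

theorem threat_of_closedNbhd_subset_insert (hdisj : Disjoint p.purple p.blue)
    (hx : x ∉ p.colored) (hwx : w ≠ x) (h : closedNbhd G w ⊆ insert x (p.colorSet c)) :
    Threat G p c w := by
  refine ⟨(h (self_mem_closedNbhd G w)).resolve_left hwx,
    eq_empty_iff_forall_notMem.2 fun t ⟨ht, htc⟩ => ?_⟩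
  obtain rfl | htc' := h ht
  · exact hx (colorSet_subset_colored p _ htc)
  · exact (disjoint_colorSet hdisj c).notMem_of_mem_left htc' htc

theorem not_sepyEnd_play (hiso : ∀ v : V, ∃ u : V, G.Adj v u) (hdisj : Disjoint p.purple p.blue)
    (hse : ¬SepyEnd G p) (hdef : ∀ w, Threat G p c w → Defused G p c w)
    (hleg : LegalMove G p x c) : ¬SepyEnd G (p.play x c) := by
  intro h
  obtain ⟨w, hw⟩ := exists_closedNbhd_subset_insert_of_sepyEnd_play hse h
  obtain rfl | hwx := eq_or_ne w x
  · exact hleg.not_closedNbhd_subset_insert hiso hw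
  obtain ⟨y, hyw, hy, hb⟩ := hdef w (threat_of_closedNbhd_subset_insert hdisj hleg.1 hwx hw)
  obtain rfl : y = x := (hw hyw).resolve_right fun hyc => hy (colorSet_subset_colored p c hyc)
  exact hleg.not_blocked hb

theorem safe_play (hiso : ∀ v : V, ∃ u : V, G.Adj v u) (hdisj : Disjoint p.purple p.blue)
    (hse : ¬SepyEnd G p) (hleg : LegalMove G p x c)
    (hx : (closedNbhd G x ∩ p.colorSet (!c)).Nonempty)
    (hkill : ∀ c' w, Threat G p c' w → Threat G (p.play x c) c' w → Defused G p c' w) :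
    Safe G (p.play x c) := by
  refine ⟨not_sepyEnd_play hiso hdisj hse (fun w hw => hkill c w hw (hw.play_self x)) hleg,
    fun c' w hw => ?_⟩
  have hne : ¬(w = x ∧ c' = c) := by
    rintro ⟨rfl, rfl⟩
    obtain ⟨t, ht⟩ := hx
    exact hw.2.subset ⟨ht.1, colorSet_subset_play p w c' _ ht.2⟩
  exact (hkill c' w (hw.of_play hne) hw).play hleg hw

theorem exists_quiet_move (hconn : G.Connected) (hse : ¬SepyEnd G p) (hd : ¬DomEnd G p)
    (hcol : p.colored.Nonempty) :
    ∃ y c, LegalMove G p y c ∧ (closedNbhd G y ∩ p.colorSet (!c)).Nonempty := by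
  by_contra! hquiet
  let Untouched (z : V) : Prop := ∀ c, closedNbhd G z ∩ p.colorSet c = ∅
  have untouched_of_legal (y : V) (hy : ∀ c, LegalMove G p y c) : Untouched y := fun c => by
    simpa using hquiet y (!c) (hy (!c))
  have legal_of_untouched {z t : V} (hz : Untouched z) (ht : t ∈ closedNbhd G z) (c : Bool) :
      LegalMove G p t c := by
    refine legalMove_of_mem_closedNbhd (fun htc => ?_) ht (hz c)
    obtain ⟨c', htc'⟩ := mem_colored_iff.1 htc
    exact (hz c').subset ⟨ht, htc'⟩
  obtain ⟨c, w, hw⟩ := exists_inter_colorSet_eq_empty hd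
  obtain ⟨y, hyw, hy⟩ := exists_uncolored_mem_closedNbhd hse hw
  have hyc : LegalMove G p y c := legalMove_of_mem_closedNbhd hy hyw hw
  have hync : LegalMove G p y (!c) :=
    legalMove_of_mem_closedNbhd hy (self_mem_closedNbhd G y) (hquiet y c hyc)
  have hyU : Untouched y := untouched_of_legal y fun c' => by
    obtain rfl | rfl := Bool.eq_or_eq_not c' c
    exacts [hyc, hync]
  obtain ⟨z, hz⟩ := hcol
  -- without quiet moves, being untouched spreads along edges, up to the colored vertex `z`
  have hzU : Untouched z := (hconn.preconnected y z).of_forall_adj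
    (fun a b hab ha => untouched_of_legal b
      (legal_of_untouched ha (mem_closedNbhd_iff.2 (Or.inr hab)))) hyU
  obtain ⟨c', hzc'⟩ := mem_colored_iff.1 hz
  exact (hzU c').subset ⟨self_mem_closedNbhd G z, hzc'⟩

theorem exists_safe_reply (hconn : G.Connected) (hiso : ∀ v : V, ∃ u : V, G.Adj v u)
    (hdisj : Disjoint p.purple p.blue) (hs : Safe G p) (hleg : LegalMove G p x c)
    (hd : ¬DomEnd G (p.play x c)) :
    ∃ y c', LegalMove G (p.play x c) y c' ∧ Safe G ((p.play x c).play y c') := by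
  have hdisj' := disjoint_play hdisj hleg.1 c
  have hse : ¬SepyEnd G (p.play x c) := not_sepyEnd_play hiso hdisj hs.1 (hs.2 c) hleg
  by_cases hx : Threat G (p.play x c) c x
  · obtain ⟨y, hyx, hy⟩ := exists_uncolored_mem_closedNbhd hse hx.2
    have hleg' : LegalMove G (p.play x c) y (!c) := legalMove_of_mem_closedNbhd hy hyx hx.2
    refine ⟨y, !c, hleg', safe_play hiso hdisj' hse hleg'
      ⟨x, mem_closedNbhd_comm.1 hyx, (Bool.not_not c).symm ▸ hx.1⟩ fun c' w hw hw' => ?_⟩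
    by_cases hne : w = x ∧ c' = c
    · obtain ⟨rfl, rfl⟩ := hne
      exact (hw'.2.subset ⟨hyx, colorSet_play_self _ y _ ▸ mem_insert y _⟩).elim
    · exact hs.defused_play hleg hw hne
  · obtain ⟨y, c', hleg', hy⟩ :=
      exists_quiet_move hconn hse hd ⟨x, colored_play p x c ▸ mem_insert x _⟩
    refine ⟨y, c', hleg', safe_play hiso hdisj' hse hleg' hy
      fun c'' w hw _ => hs.defused_play hleg hw ?_⟩
    rintro ⟨rfl, rfl⟩
    exact hx hw

theorem domWins_of_safe [Finite V] (hconn : G.Connected) (hiso : ∀ v : V, ∃ u : V, G.Adj v u)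
    (hdisj : Disjoint p.purple p.blue) (hcol : p.colored.Nonempty) (hs : Safe G p) :
    DomWins G false p := by
  induction hn : p.coloredᶜ.ncard using Nat.strong_induction_on generalizing p with
  | _ n ih =>
  by_cases hd : DomEnd G p
  · exact .terminal _ _ hs.1 hd
  refine .sepyStep p hs.1 hd (exists_legalMove hs.1 hd) fun x c hleg => ?_
  have hse : ¬SepyEnd G (p.play x c) := not_sepyEnd_play hiso hdisj hs.1 (hs.2 c) hleg
  by_cases hd' : DomEnd G (p.play x c)
  · exact .terminal _ _ hse hd'
  obtain ⟨y, c', hleg', hs'⟩ := exists_safe_reply hconn hiso hdisj hs hleg hd'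
  refine .domStep _ y c' hse hd' hleg' (ih _ ?_ (disjoint_play (disjoint_play hdisj hleg.1 c)
    hleg'.1 c') ⟨y, colored_play _ y c' ▸ mem_insert y _⟩ hs' rfl)
  exact hn ▸ (ncard_compl_colored_play_lt hleg'.1 c').trans (ncard_compl_colored_play_lt hleg.1 c)

theorem safe_play_empty {u v : V} (huv : u ≠ v) (hsub : closedNbhd G u ⊆ closedNbhd G v) :
    Safe G ((⟨∅, ∅⟩ : Pos V).play v true) := by
  have hvu : u ∈ closedNbhd G v := hsub (self_mem_closedNbhd G u)
  have purple_eq : ∀ c w, w ∈ ((⟨∅, ∅⟩ : Pos V).play v true).colorSet c → w = v ∧ c = true := by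
    intro c w
    cases c <;> simp [play, colorSet]
  refine ⟨fun h => ?_, fun c w hw => ?_⟩
  · obtain ⟨w, c, hw⟩ := sepyEnd_iff.1 h
    obtain ⟨rfl, -⟩ := purple_eq c w (hw (self_mem_closedNbhd G w))
    exact huv (purple_eq c u (hw hvu)).1
  · obtain ⟨rfl, rfl⟩ := purple_eq c w hw.1
    exact ⟨u, hvu, by simp [colored, play, huv],
      fun z hz => ⟨w, mem_closedNbhd_comm.1 (hsub hz), by simp [play, colorSet]⟩⟩

end DDG

/-- if a finite connected isolate-free graph `G` has two distinct
vertices `u`, `v` with `N[u] ⊆ N[v]`, then Dom has a winning strategy in the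
Dom-start Disjoint Domination Game on `G`. -/
theorem statement7 {V : Type*} [Fintype V] (G : SimpleGraph V)
    (hconn : G.Connected) (hiso : ∀ v : V, ∃ u : V, G.Adj v u)
    (u v : V) (huv : u ≠ v) (hsub : closedNbhd G u ⊆ closedNbhd G v) :
    DomWins G true ⟨∅, ∅⟩ := by
  have hse : ¬SepyEnd G (⟨∅, ∅⟩ : Pos V) := fun ⟨w, hw⟩ =>
    hw.elim (· (self_mem_closedNbhd G w)) (· (self_mem_closedNbhd G w))
  have hd : ¬DomEnd G (⟨∅, ∅⟩ : Pos V) := fun h => (h.1 u).ne_empty (Set.inter_empty _)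
  have hleg : LegalMove G ⟨∅, ∅⟩ v true :=
    ⟨by simp, v, self_mem_closedNbhd G v, Set.inter_empty _⟩
  exact .domStep _ v true hse hd hleg (domWins_of_safe hconn hiso
    (Pos.disjoint_play (Set.disjoint_empty _) hleg.1 true) ⟨v, by simp [Pos.colored, Pos.play]⟩
    (safe_play_empty huv hsub))
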